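/- Let R be a ring. Consider a commutative diagram of R-modules in which the rows are exact: the top row is A → B → C → 0 (with maps u : A → B and q : B → C, so that im u = ker q and q is surjective), the bottom row is D → A' → B' → C' (with maps λ : D → A', u' : A' → B' and q' : B' → C', so that im λ = ker u' and im u' = ker q'), and there are vertical R-linear maps f : A → A', g : B → B', h : C → C' making both squares commute (g ∘ u = u' ∘ f and h ∘ q = q' ∘ g). If g is an isomorphism, then ker(h) is isomorphic as an R-module to coker(f + λ), where f + λ : A ⊕ D → A' is the R-linear map defined by (a, d) ↦ f(a) + λ(d) and coker(f + λ) = A' / im(f + λ). -/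
import Mathlib


/-- Given a commutative diagram of `R`-modules with exact rows
    A → B → C → 0  (top row)
    D → A' → B' → C'  (bottom row)
and vertical maps `f, g, h` making both squares commute, if `g` is an
isomorphism then `ker h ≃ coker (f + λ)`, where
`f + λ : A ⊕ D → A'` is `(a, d) ↦ f a + λ d`. -/
theorem ker_iso_coker_of_ladder
    (R : Type*) [Ring R]
    (A B C D A' B' C' : Type*)
    [AddCommGroup A] [Module R A] [AddCommGroup B] [Module R B]
    [AddCommGroup C] [Module R C] [AddCommGroup D] [Module R D]
    [AddCommGroup A'] [Module R A'] [AddCommGroup B'] [Module R B']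
    [AddCommGroup C'] [Module R C']
    (u : A →ₗ[R] B) (q : B →ₗ[R] C)
    (lam : D →ₗ[R] A') (u' : A' →ₗ[R] B') (q' : B' →ₗ[R] C')
    (f : A →ₗ[R] A') (g : B →ₗ[R] B') (h : C →ₗ[R] C')
    (hTop : LinearMap.range u = LinearMap.ker q)
    (hqSurj : Function.Surjective q)
    (hBot1 : LinearMap.range lam = LinearMap.ker u')
    (hBot2 : LinearMap.range u' = LinearMap.ker q')
    (hSq1 : g.comp u = u'.comp f)
    (hSq2 : h.comp q = q'.comp g)
    (hgIso : Function.Bijective g) :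
    Nonempty
      ((LinearMap.ker h) ≃ₗ[R]
        (A' ⧸ LinearMap.range (f.coprod lam))) := by
  classical
  set gE := LinearEquiv.ofBijective g hgIso with hgE
  set φ0 : A' →ₗ[R] C := q.comp ((gE.symm : B' →ₗ[R] B).comp u') with hφ0
  have hSq2' : ∀ b, h (q b) = q' (g b) := fun b => LinearMap.congr_fun hSq2 b
  have hSq1' : ∀ a, g (u a) = u' (f a) := fun a => LinearMap.congr_fun hSq1 a
  have hmem : ∀ a' : A', φ0 a' ∈ LinearMap.ker h := by
    intro a'
    have h1 : q' (u' a') = 0 := by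
      have : u' a' ∈ LinearMap.ker q' := hBot2 ▸ LinearMap.mem_range_self u' a'
      simpa using this
    have h2 : g (gE.symm (u' a')) = u' a' := gE.apply_symm_apply (u' a')
    simp only [LinearMap.mem_ker, hφ0, LinearMap.comp_apply, LinearMap.coe_comp,
      Function.comp_apply, LinearEquiv.coe_coe]
    rw [hSq2', h2, h1]
  set φ : A' →ₗ[R] LinearMap.ker h := φ0.codRestrict (LinearMap.ker h) hmem with hφ
  have hsurj : Function.Surjective φ := by
    rintro ⟨c, hc⟩
    obtain ⟨b, hb⟩ := hqSurj c
    have hgb : g b ∈ LinearMap.ker q' := by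
      simp only [LinearMap.mem_ker, ← hSq2', hb]
      simpa using hc
    rw [← hBot2] at hgb
    obtain ⟨a', ha'⟩ := hgb
    refine ⟨a', Subtype.ext ?_⟩
    have hbval : gE.symm (u' a') = b := by
      apply gE.injective; rw [gE.apply_symm_apply]; exact ha'.symm ▸ ha'
    simp [hφ, hφ0, LinearMap.codRestrict_apply, hbval, hb]
  have hker : LinearMap.ker φ = LinearMap.range (f.coprod lam) := by
    rw [hφ, LinearMap.ker_codRestrict]
    ext a'
    simp only [LinearMap.mem_ker, hφ0, LinearMap.comp_apply, LinearMap.coe_comp,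
      Function.comp_apply, LinearEquiv.coe_coe]
    constructor
    · intro hq0
      have hmem2 : gE.symm (u' a') ∈ LinearMap.range u := by
        rw [hTop]; exact hq0
      obtain ⟨a, ha⟩ := hmem2
      have hg1 : g (u a) = u' a' := by
        have : gE (gE.symm (u' a')) = u' a' := gE.apply_symm_apply _
        rw [ha]; exact this
      have hu' : u' (a' - f a) = 0 := by
        rw [map_sub, ← hSq1', hg1, sub_self]
      have : a' - f a ∈ LinearMap.range lam := by rw [hBot1]; exact hu'
      obtain ⟨d, hd⟩ := this
      exact ⟨(a, d), by simp [hd]⟩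
    · rintro ⟨⟨a, d⟩, rfl⟩
      have hld : u' (lam d) = 0 := by
        have : lam d ∈ LinearMap.ker u' := hBot1 ▸ LinearMap.mem_range_self lam d
        simpa using this
      have key : u' (f.coprod lam (a, d)) = gE (u a) := by
        simp only [LinearMap.coprod_apply, map_add, hld, add_zero, ← hSq1']
        rfl
      have h2 : gE.symm (u' (f.coprod lam (a, d))) = u a := by
        rw [key, gE.symm_apply_apply]
      rw [h2]
      have : u a ∈ LinearMap.ker q := hTop ▸ LinearMap.mem_range_self u a
      simpa using this
  exact ⟨(φ.quotKerEquivOfSurjective hsurj).symm.trans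
    (Submodule.quotEquivOfEq _ _ hker)⟩
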